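/- Second Gaussian integral identity with Owen's T function: for all μ ∈ ℝ, σ > 0 and c ∈ (0, σ²), ∫_0^1 (√(σ² − τc)/√τ)·φ(μ/√(σ² − τc)) dτ = √(σ² − c)·φ(μ/√(σ² − c)) + (√(2π)·μσ/√c)·φ(μ/σ)·[Φ((μ/σ)·√(c/(σ² − c))) − 1/2] + (√(2π)/√c)·(σ² − μ²)·T(μ/σ, √(c/(σ² − c))). -/

import Mathlib

open MeasureTheory ProbabilityTheory Real

/-- Standard normal CDF `Φ`. -/
noncomputable def stdNormalCDF (x : ℝ) : ℝ := ((gaussianReal 0 1) (Set.Iic x)).toReal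

/-- Standard normal PDF `φ`. -/
noncomputable def stdNormalPDF (x : ℝ) : ℝ :=
  Real.exp (-x ^ 2 / 2) / Real.sqrt (2 * Real.pi)

/-- Owen's T function `T(x,y) = (1/(2π)) ∫_0^y exp(−x²(1+z²)/2)/(1+z²) dz`. -/
noncomputable def owenT (x y : ℝ) : ℝ :=
  1 / (2 * Real.pi) * ∫ z in (0 : ℝ)..y, Real.exp (-x ^ 2 * (1 + z ^ 2) / 2) / (1 + z ^ 2)

/-!
The substitution `τ = (σ²/c) z² / (1 + z²)` maps `z ∈ [0, √(c/(σ² - c))]` onto `τ ∈ [0, 1]` and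
turns the integrand into a constant multiple of `exp (-x² (1 + z²) / 2) / (1 + z²)²`, where
`x = μ/σ`. Differentiating `z / (2 (1 + z²)) · exp (-x² (1 + z²) / 2)` trades the square in the
denominator for the Owen `T` integrand plus the Gaussian `exp (-x² (1 + z²) / 2)`, and the
Gaussian integrates to `Φ`.
-/

lemma gaussianPDFReal_zero_one : gaussianPDFReal 0 1 = stdNormalPDF := by
  ext t
  simp [gaussianPDFReal, stdNormalPDF, div_eq_inv_mul, mul_comm]

lemma integrable_stdNormalPDF : Integrable stdNormalPDF :=
  gaussianPDFReal_zero_one ▸ integrable_gaussianPDFReal 0 1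

lemma stdNormalCDF_eq_setIntegral (x : ℝ) :
    stdNormalCDF x = ∫ t in Set.Iic x, stdNormalPDF t := by
  rw [stdNormalCDF, gaussianReal_apply_eq_integral 0 one_ne_zero,
    ENNReal.toReal_ofReal (integral_nonneg fun t => gaussianPDFReal_nonneg 0 1 t),
    gaussianPDFReal_zero_one]

lemma integral_stdNormalPDF (a b : ℝ) :
    ∫ t in a..b, stdNormalPDF t = stdNormalCDF b - stdNormalCDF a := by
  rw [stdNormalCDF_eq_setIntegral, stdNormalCDF_eq_setIntegral,
    intervalIntegral.integral_Iic_sub_Iic integrable_stdNormalPDF.integrableOn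
      integrable_stdNormalPDF.integrableOn]

lemma stdNormalCDF_zero : stdNormalCDF 0 = 1 / 2 := by
  have h_total : ∫ t, stdNormalPDF t = 1 :=
    gaussianPDFReal_zero_one ▸ integral_gaussianPDFReal_eq_one 0 one_ne_zero
  have h_symm : ∫ t in Set.Ioi 0, stdNormalPDF t = ∫ t in Set.Iic 0, stdNormalPDF t := by
    simpa [stdNormalPDF] using integral_comp_neg_Ioi 0 stdNormalPDF
  rw [← intervalIntegral.integral_Iic_add_Ioi integrable_stdNormalPDF.integrableOn
    integrable_stdNormalPDF.integrableOn, h_symm] at h_total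
  rw [stdNormalCDF_eq_setIntegral]
  linarith

lemma exp_neg_sq_div_two_eq_mul_stdNormalPDF (x : ℝ) :
    exp (-x ^ 2 / 2) = √(2 * π) * stdNormalPDF x := by
  rw [stdNormalPDF, mul_div_cancel₀ _ (by positivity)]

lemma mul_integral_exp_neg_mul_sq_div_two (x w : ℝ) :
    x * ∫ z in (0 : ℝ)..w, exp (-x ^ 2 * z ^ 2 / 2)
      = √(2 * π) * (stdNormalCDF (x * w) - 1 / 2) := by
  rcases eq_or_ne x 0 with rfl | hx
  · simp [stdNormalCDF_zero]
  have h_pdf (z : ℝ) : exp (-x ^ 2 * z ^ 2 / 2) = √(2 * π) * stdNormalPDF (x * z) := by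
    rw [← exp_neg_sq_div_two_eq_mul_stdNormalPDF]
    ring_nf
  simp_rw [h_pdf, intervalIntegral.integral_const_mul,
    intervalIntegral.integral_comp_mul_left _ hx, mul_zero, integral_stdNormalPDF,
    stdNormalCDF_zero, smul_eq_mul]
  field_simp

lemma hasDerivAt_div_mul_exp_neg_one_add_sq (x z : ℝ) :
    HasDerivAt (fun z => z / (2 * (1 + z ^ 2)) * exp (-x ^ 2 * (1 + z ^ 2) / 2))
      (exp (-x ^ 2 * (1 + z ^ 2) / 2) / (1 + z ^ 2) ^ 2
        - (1 - x ^ 2) / 2 * (exp (-x ^ 2 * (1 + z ^ 2) / 2) / (1 + z ^ 2))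
        - x ^ 2 / 2 * exp (-x ^ 2 * (1 + z ^ 2) / 2)) z := by
  have h_frac : HasDerivAt (fun z : ℝ => z / (2 * (1 + z ^ 2)))
      ((1 * (2 * (1 + z ^ 2)) - z * (2 * (2 * z))) / (2 * (1 + z ^ 2)) ^ 2) z := by
    refine ((hasDerivAt_id z).div (((hasDerivAt_pow 2 z).const_add 1).const_mul 2)
      (by positivity)).congr_deriv ?_
    simp
  have h_exp : HasDerivAt (fun z : ℝ => exp (-x ^ 2 * (1 + z ^ 2) / 2))
      (exp (-x ^ 2 * (1 + z ^ 2) / 2) * (-x ^ 2 * (2 * z) / 2)) z := by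
    refine ((((hasDerivAt_pow 2 z).const_add 1).const_mul (-x ^ 2)).div_const 2).exp.congr_deriv ?_
    simp
  refine (h_frac.mul h_exp).congr_deriv ?_
  field_simp
  ring

lemma integral_exp_div_one_add_sq_sq (x w : ℝ) :
    ∫ z in (0 : ℝ)..w, exp (-x ^ 2 * (1 + z ^ 2) / 2) / (1 + z ^ 2) ^ 2
      = w / (2 * (1 + w ^ 2)) * exp (-x ^ 2 * (1 + w ^ 2) / 2)
        + π * (1 - x ^ 2) * owenT x w
        + π * x * stdNormalPDF x * (stdNormalCDF (x * w) - 1 / 2) := by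
  have h_int (f : ℝ → ℝ) (hf : Continuous f) : IntervalIntegrable f volume 0 w :=
    hf.intervalIntegrable 0 w
  have h_ftc := intervalIntegral.integral_eq_sub_of_hasDerivAt
    (fun z _ => hasDerivAt_div_mul_exp_neg_one_add_sq x z)
    (h_int _ (by fun_prop (disch := intros; positivity)))
  rw [intervalIntegral.integral_sub (h_int _ (by fun_prop (disch := intros; positivity)))
      (h_int _ (by fun_prop)),
    intervalIntegral.integral_sub (h_int _ (by fun_prop (disch := intros; positivity)))
      (h_int _ (by fun_prop (disch := intros; positivity))),
    intervalIntegral.integral_const_mul, intervalIntegral.integral_const_mul] at h_ftc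
  have h_owenT : ∫ z in (0 : ℝ)..w, exp (-x ^ 2 * (1 + z ^ 2) / 2) / (1 + z ^ 2)
      = 2 * π * owenT x w := by
    rw [owenT]
    field_simp
  have h_gauss : x * ∫ z in (0 : ℝ)..w, exp (-x ^ 2 * (1 + z ^ 2) / 2)
      = 2 * π * stdNormalPDF x * (stdNormalCDF (x * w) - 1 / 2) := by
    have h_split (z : ℝ) :
        exp (-x ^ 2 * (1 + z ^ 2) / 2) = exp (-x ^ 2 / 2) * exp (-x ^ 2 * z ^ 2 / 2) := by
      rw [← exp_add]
      ring_nf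
    simp_rw [h_split, intervalIntegral.integral_const_mul, mul_left_comm x,
      mul_integral_exp_neg_mul_sq_div_two, exp_neg_sq_div_two_eq_mul_stdNormalPDF]
    rw [← mul_assoc, mul_comm _ (√(2 * π)), ← mul_assoc, mul_self_sqrt (by positivity)]
  rw [zero_div, zero_mul, sub_zero, h_owenT] at h_ftc
  linear_combination h_ftc + x / 2 * h_gauss

lemma integral_comp_mul_sq_div_one_add_sq {E : Type*} [NormedAddCommGroup E] [NormedSpace ℝ E]
    {k w : ℝ} (hk : 0 ≤ k) (hw : 0 ≤ w) (f : ℝ → E) :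
    ∫ z in (0 : ℝ)..w, (k * (2 * z / (1 + z ^ 2) ^ 2)) • f (k * (z ^ 2 / (1 + z ^ 2)))
      = ∫ τ in (0 : ℝ)..k * (w ^ 2 / (1 + w ^ 2)), f τ := by
  have h_deriv (z : ℝ) : HasDerivAt (fun z => k * (z ^ 2 / (1 + z ^ 2)))
      (k * (2 * z / (1 + z ^ 2) ^ 2)) z := by
    refine (((hasDerivAt_pow 2 z).div ((hasDerivAt_pow 2 z).const_add 1)
      (by positivity)).const_mul k).congr_deriv ?_
    field_simp
    ring
  have h_subst := integral_Icc_deriv_smul_of_deriv_nonneg (g := f)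
    (by fun_prop (disch := intros; positivity)) (fun z _ => h_deriv z)
    (fun z hz => by have := hz.1.le; positivity) hw
  rw [intervalIntegral.integral_of_le hw, intervalIntegral.integral_of_le (by positivity),
    ← integral_Icc_eq_integral_Ioc, ← integral_Icc_eq_integral_Ioc, h_subst]
  simp

lemma integrand_comp_mul_sq_div_one_add_sq (μ : ℝ) {σ c z : ℝ} (hσ : 0 < σ) (hc : 0 < c)
    (hz : 0 < z) :
    σ ^ 2 / c * (2 * z / (1 + z ^ 2) ^ 2) *
        (√(σ ^ 2 - σ ^ 2 / c * (z ^ 2 / (1 + z ^ 2)) * c) / √(σ ^ 2 / c * (z ^ 2 / (1 + z ^ 2)))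
          * stdNormalPDF (μ / √(σ ^ 2 - σ ^ 2 / c * (z ^ 2 / (1 + z ^ 2)) * c)))
      = 2 * σ ^ 2 / (√c * √(2 * π))
          * (exp (-(μ / σ) ^ 2 * (1 + z ^ 2) / 2) / (1 + z ^ 2) ^ 2) := by
  have hpos : 0 < 1 + z ^ 2 := by positivity
  have h_var : σ ^ 2 - σ ^ 2 / c * (z ^ 2 / (1 + z ^ 2)) * c = (σ / √(1 + z ^ 2)) ^ 2 := by
    rw [div_pow, sq_sqrt hpos.le]
    field_simp
    ring
  have h_time : σ ^ 2 / c * (z ^ 2 / (1 + z ^ 2)) = (σ * z / (√c * √(1 + z ^ 2))) ^ 2 := by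
    rw [div_pow, mul_pow, mul_pow, sq_sqrt hc.le, sq_sqrt hpos.le]
    field_simp
  have h_pdf : stdNormalPDF (μ / (σ / √(1 + z ^ 2)))
      = exp (-(μ / σ) ^ 2 * (1 + z ^ 2) / 2) / √(2 * π) := by
    rw [stdNormalPDF, div_div_eq_mul_div, div_pow, mul_pow, sq_sqrt hpos.le]
    ring_nf
  have : 0 < √(1 + z ^ 2) := sqrt_pos.2 hpos
  have : 0 < √c := sqrt_pos.2 hc
  rw [h_var, h_time, sqrt_sq (by positivity), sqrt_sq (by positivity), h_pdf]
  field_simp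
  exact sq_sqrt hc.le

lemma one_add_sqrt_div_sub_sq {a b : ℝ} (ha : 0 ≤ a) (hab : a < b) :
    1 + √(a / (b - a)) ^ 2 = b / (b - a) := by
  have : 0 < b - a := sub_pos.2 hab
  rw [sq_sqrt (by positivity)]
  field_simp
  ring

lemma integral_sqrt_div_sqrt_mul_stdNormalPDF (μ : ℝ) {σ c : ℝ} (hσ : 0 < σ) (hc : 0 < c)
    (hcσ : c < σ ^ 2) :
    ∫ τ in (0 : ℝ)..1, √(σ ^ 2 - τ * c) / √τ * stdNormalPDF (μ / √(σ ^ 2 - τ * c))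
      = 2 * σ ^ 2 / (√c * √(2 * π)) * ∫ z in (0 : ℝ)..√(c / (σ ^ 2 - c)),
          exp (-(μ / σ) ^ 2 * (1 + z ^ 2) / 2) / (1 + z ^ 2) ^ 2 := by
  have hσc : 0 < σ ^ 2 - c := sub_pos.2 hcσ
  have h_end : σ ^ 2 / c * (√(c / (σ ^ 2 - c)) ^ 2 / (1 + √(c / (σ ^ 2 - c)) ^ 2)) = 1 := by
    rw [one_add_sqrt_div_sub_sq hc.le hcσ, sq_sqrt (by positivity)]
    field_simp
  set w := √(c / (σ ^ 2 - c))
  set F : ℝ → ℝ := fun τ => √(σ ^ 2 - τ * c) / √τ * stdNormalPDF (μ / √(σ ^ 2 - τ * c))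
  rw [← intervalIntegral.integral_const_mul]
  calc ∫ τ in (0 : ℝ)..1, F τ
      = ∫ τ in (0 : ℝ)..σ ^ 2 / c * (w ^ 2 / (1 + w ^ 2)), F τ := by rw [h_end]
    _ = ∫ z in (0 : ℝ)..w,
          (σ ^ 2 / c * (2 * z / (1 + z ^ 2) ^ 2)) • F (σ ^ 2 / c * (z ^ 2 / (1 + z ^ 2))) :=
        (integral_comp_mul_sq_div_one_add_sq (by positivity) (sqrt_nonneg _) F).symm
    _ = _ :=
        intervalIntegral.integral_congr_ae (.of_forall fun z hz =>
          integrand_comp_mul_sq_div_one_add_sq μ hσ hc (Set.uIoc_of_le (sqrt_nonneg _) ▸ hz).1)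

/-- **Second Gaussian integral identity with Owen's T function** (Lemma G.2): for all
`μ ∈ ℝ`, `σ > 0` and `c ∈ (0, σ²)`,
`∫_0^1 (√(σ²−τc)/√τ) φ(μ/√(σ²−τc)) dτ = √(σ²−c) φ(μ/√(σ²−c))
  + (√(2π)μσ/√c) φ(μ/σ) [Φ((μ/σ)√(c/(σ²−c))) − 1/2]
  + (√(2π)/√c)(σ² − μ²) T(μ/σ, √(c/(σ²−c)))`. -/
theorem gaussian_integral_owenT_second
    (μ σ c : ℝ) (hσ : 0 < σ) (hc : c ∈ Set.Ioo 0 (σ ^ 2)) :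
    (∫ τ in (0 : ℝ)..1,
        Real.sqrt (σ ^ 2 - τ * c) / Real.sqrt τ * stdNormalPDF (μ / Real.sqrt (σ ^ 2 - τ * c))) =
      Real.sqrt (σ ^ 2 - c) * stdNormalPDF (μ / Real.sqrt (σ ^ 2 - c))
        + Real.sqrt (2 * Real.pi) * μ * σ / Real.sqrt c * stdNormalPDF (μ / σ)
            * (stdNormalCDF (μ / σ * Real.sqrt (c / (σ ^ 2 - c))) - 1 / 2)
        + Real.sqrt (2 * Real.pi) / Real.sqrt c * (σ ^ 2 - μ ^ 2)
            * owenT (μ / σ) (Real.sqrt (c / (σ ^ 2 - c))) := by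
  obtain ⟨hc, hcσ⟩ := hc
  have hσc : 0 < σ ^ 2 - c := sub_pos.2 hcσ
  have h_one := one_add_sqrt_div_sub_sq hc.le hcσ
  have h_pdf : exp (-(μ / σ) ^ 2 * (σ ^ 2 / (σ ^ 2 - c)) / 2)
      = √(2 * π) * stdNormalPDF (μ / √(σ ^ 2 - c)) := by
    rw [← exp_neg_sq_div_two_eq_mul_stdNormalPDF, div_pow μ (√_), sq_sqrt hσc.le]
    field_simp
  rw [integral_sqrt_div_sqrt_mul_stdNormalPDF μ hσ hc hcσ, integral_exp_div_one_add_sq_sq,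
    h_one, h_pdf, sqrt_div' _ hσc.le]
  have : 0 < √c := sqrt_pos.2 hc
  have : 0 < √(σ ^ 2 - c) := sqrt_pos.2 hσc
  have : 0 < √(2 * π) := by positivity
  set s := √(σ ^ 2 - c) with hs
  set p := √(2 * π) with hp
  have h_pi : π = p ^ 2 / 2 := by rw [hp, sq_sqrt (by positivity)]; ring
  have h_var : σ ^ 2 - c = s ^ 2 := by rw [hs, sq_sqrt hσc.le]
  rw [h_pi, h_var]
  field_simp
  ring
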